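/- For odd m = 2k+1, fix a preference ≽^sing on the single items with x_1 ≽^sing x_2 ≽^sing ⋯ ≽^sing x_{2k+1}. Then the set {x_1, x_3, x_5, …, x_{2k+1}} of the odd-indexed items is necessarily agreeable with respect to ≽^sing. -/

import Mathlib

open Finset

/-- A preference on subsets: a complete (total, hence reflexive) and transitive relation. -/
def IsPref {m : ℕ} (R : Finset (Fin m) → Finset (Fin m) → Prop) : Prop :=
  (∀ A B, R A B ∨ R B A) ∧ ∀ A B C, R A B → R B C → R A C

/-- A preference on single items: a complete and transitive relation. -/
def IsSingPref {m : ℕ} (Rs : Fin m → Fin m → Prop) : Prop :=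
  (∀ x y, Rs x y ∨ Rs y x) ∧ ∀ x y z, Rs x y → Rs y z → Rs x z

/-- A preference is monotonic if `T ∪ {x} ≽ T` for every subset `T` and item `x`. -/
def MonotonicPref {m : ℕ} (R : Finset (Fin m) → Finset (Fin m) → Prop) : Prop :=
  ∀ (T : Finset (Fin m)) (x : Fin m), R (insert x T) T

/-- A preference on subsets is responsive w.r.t. a preference `Rs` on single items if it is
monotonic and `(T \ {y}) ∪ {x} ≽ T` whenever `x ∉ T`, `y ∈ T` and `x ≽ˢ y`. -/
def Responsive {m : ℕ} (Rs : Fin m → Fin m → Prop)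
    (R : Finset (Fin m) → Finset (Fin m) → Prop) : Prop :=
  MonotonicPref R ∧
    ∀ (T : Finset (Fin m)) (x y : Fin m),
      x ∉ T → y ∈ T → Rs x y → R (insert x (T.erase y)) T

/-- A preference on subsets is consistent with a preference on single items if its
restriction to singletons agrees with it. -/
def Consistent {m : ℕ} (Rs : Fin m → Fin m → Prop)
    (R : Finset (Fin m) → Finset (Fin m) → Prop) : Prop :=
  ∀ x y : Fin m, R {x} {y} ↔ Rs x y

/-- `T` is necessarily agreeable w.r.t. `Rs` if `T ≽ Tᶜ` for every responsive preference
consistent with `Rs`. -/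
def NecAgreeable {m : ℕ} (Rs : Fin m → Fin m → Prop) (T : Finset (Fin m)) : Prop :=
  ∀ R : Finset (Fin m) → Finset (Fin m) → Prop,
    IsPref R → Responsive Rs R → Consistent Rs R → R T Tᶜ

/-- `T` is possibly agreeable w.r.t. `Rs` if `T ≻ Tᶜ` for some responsive preference
consistent with `Rs`. -/
def PossAgreeable {m : ℕ} (Rs : Fin m → Fin m → Prop) (T : Finset (Fin m)) : Prop :=
  ∃ R : Finset (Fin m) → Finset (Fin m) → Prop,
    IsPref R ∧ Responsive Rs R ∧ Consistent Rs R ∧ R T Tᶜ ∧ ¬ R Tᶜ T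

/-
Start from the complement `{x_2, x_4, …, x_{2k}}` of the odd-indexed items and, for
`j = 1, …, k` in turn, swap `x_{2j}` for the weakly better item `x_{2j-1}`; by responsiveness
each swap is weakly improving. After `k` swaps the bundle is `{x_1, x_3, …, x_{2k-1}}`, and
adding `x_{2k+1}` is weakly improving by monotonicity, so transitivity gives `T ≽ S ∖ T`.
-/

variable {m : ℕ}

theorem IsPref.refl {R : Finset (Fin m) → Finset (Fin m) → Prop} (hR : IsPref R)
    (A : Finset (Fin m)) : R A A :=
  (hR.1 A A).elim id id

theorem IsPref.rel_of_forall_succ {R : Finset (Fin m) → Finset (Fin m) → Prop}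
    (hR : IsPref R) {A : ℕ → Finset (Fin m)} :
    ∀ {n : ℕ}, (∀ j < n, R (A (j + 1)) (A j)) → R (A n) (A 0)
  | 0, _ => hR.refl _
  | n + 1, h =>
    hR.2 _ _ _ (h n n.lt_succ_self) (rel_of_forall_succ hR fun j hj => h j (by omega))

/-- The bundle after the first `j` swaps, in 0-based positions. -/
def swapStage (m j : ℕ) : Finset (Fin m) :=
  univ.filter fun x => (x.val < 2 * j ∧ x.val % 2 = 0) ∨ (2 * j ≤ x.val ∧ x.val % 2 = 1)

theorem swapStage_zero : swapStage m 0 = (univ.filter fun x : Fin m => x.val % 2 = 0)ᶜ := by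
  ext x
  simp only [swapStage, mem_compl, mem_filter, mem_univ, true_and]
  omega

theorem insert_erase_swapStage {j : ℕ} (h : 2 * j + 1 < m) :
    insert ⟨2 * j, by omega⟩ ((swapStage m j).erase ⟨2 * j + 1, h⟩) = swapStage m (j + 1) := by
  ext x
  simp only [swapStage, mem_insert, mem_erase, mem_filter, mem_univ, true_and, ne_eq,
    Fin.ext_iff]
  omega

theorem insert_last_swapStage (k : ℕ) :
    insert (Fin.last (2 * k)) (swapStage (2 * k + 1) k)
      = univ.filter fun x : Fin (2 * k + 1) => x.val % 2 = 0 := by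
  ext x
  simp only [swapStage, mem_insert, mem_filter, mem_univ, true_and, Fin.ext_iff, Fin.val_last]
  omega

theorem Responsive.swapStage_succ {Rs : Fin m → Fin m → Prop}
    {R : Finset (Fin m) → Finset (Fin m) → Prop} (hResp : Responsive Rs R) {j : ℕ}
    (h : 2 * j + 1 < m) (hRs : Rs ⟨2 * j, by omega⟩ ⟨2 * j + 1, h⟩) :
    R (swapStage m (j + 1)) (swapStage m j) :=
  insert_erase_swapStage h ▸ hResp.2 _ _ _ (by simp [swapStage]) (by simp [swapStage]) hRs

/-- Item `x_i` is `(i-1 : Fin (2k+1))`, so the odd-indexed items have even `Fin` values. -/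
theorem stmt_19_general (k : ℕ) (Rs : Fin (2 * k + 1) → Fin (2 * k + 1) → Prop)
    (hord : ∀ i j : Fin (2 * k + 1), i ≤ j → Rs i j) :
    NecAgreeable Rs (Finset.univ.filter (fun x => x.val % 2 = 0)) := by
  intro R hR hResp _
  have hswaps : R (swapStage _ k) (swapStage _ 0) :=
    hR.rel_of_forall_succ fun j hj =>
      hResp.swapStage_succ (by omega) (hord _ _ (by simp [Fin.le_def]))
  rw [← swapStage_zero, ← insert_last_swapStage]
  exact hR.2 _ _ _ (hResp.1 _ _) hswaps

/-- For `m = 2k+1` items with `x_1 ≽ˢ x_2 ≽ˢ ⋯ ≽ˢ x_{2k+1}` (item `x_i` is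
`(i-1 : Fin (2k+1))`), the set `{x_1, x_3, …, x_{2k+1}}` of odd-indexed items (even `Fin`
values) is necessarily agreeable w.r.t. `≽ˢ`. -/
theorem stmt_19 (k : ℕ) (Rs : Fin (2 * k + 1) → Fin (2 * k + 1) → Prop)
    (hRs : IsSingPref Rs)
    (hord : ∀ i j : Fin (2 * k + 1), i ≤ j → Rs i j) :
    NecAgreeable Rs (Finset.univ.filter (fun x => x.val % 2 = 0)) :=
  stmt_19_general k Rs hord
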